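/- arXiv:1812.10701 — 2 statements merged into one kernel-verified Lean document; each statement's English description precedes it below -/
import Mathlib

section
/- Let n and k be integers with 2 ≤ k ≤ n−3, and let G be a connected simple graph of order n. If |E(G)| ≥ C(n−k−1, 2) + k + 2, then the conflict-free connection number of G satisfies cfc(G) ≤ k, where C(m,2) = m(m−1)/2 denotes a binomial coefficient. -/
/-!
A connected graph with at most `k ≥ 2` bridges has a conflict-free `k`-coloring: fix a spanning
tree `T`, which contains every bridge, give the bridges pairwise distinct colors, the other edges
of `T` a color `c₀` and the edges outside `T` a color `c₁ ≠ c₀`. On the tree path between two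
vertices some bridge has a unique color, unless every bridge on it has color `c₀` and some edge `d`
of it is not a bridge; a cycle through `d` then yields a path with exactly one edge outside `T`,
the only edge of color `c₁` on it.

Deleting the `b` bridges one at a time creates `b` new components, so the remaining edges lie
inside at least `b + 1` components and number at most `C(n - b, 2)`. Hence
`|E| ≤ b + C(n - b, 2)`, which decreases in `b < n`, and `|E| ≥ C(n - k - 1, 2) + k + 2` forces
`b ≤ k`.
-/

open SimpleGraph

/-- An edge-coloring `c` with `k` colors makes `G` conflict-free connected if every two
distinct vertices are joined by a path on which some color appears on exactly one edge. -/
def SimpleGraph.IsCFCColoring {V : Type*} (G : SimpleGraph V) {k : ℕ}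
    (c : Sym2 V → Fin k) : Prop :=
  ∀ u v : V, u ≠ v → ∃ p : G.Walk u v, p.IsPath ∧
    ∃ col : Fin k, (p.edges.map c).count col = 1

/-- The conflict-free connection number of `G`: the smallest number of colors in an
edge-coloring of `G` that makes `G` conflict-free connected. -/
noncomputable def SimpleGraph.cfc {V : Type*} (G : SimpleGraph V) : ℕ :=
  sInf {k | ∃ c : Sym2 V → Fin k, G.IsCFCColoring c}

open Finset

lemma List.count_map_eq_one {α β : Type*} [DecidableEq β] {l : List α} {f : α → β} {a : α}
    (hl : l.Nodup) (ha : a ∈ l) (hf : ∀ b ∈ l, f b = f a → b = a) :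
    (l.map f).count (f a) = 1 := by
  classical
  rw [List.count, List.countP_map, ← List.count_eq_one_of_mem hl ha, List.count]
  refine List.countP_congr fun b hb ↦ ?_
  simp only [Function.comp, beq_iff_eq]
  exact ⟨hf b hb, fun h ↦ h ▸ rfl⟩

lemma Nat.add_choose_two (a b : ℕ) : (a + b).choose 2 = a.choose 2 + b.choose 2 + a * b := by
  induction b with
  | zero => simp
  | succ b ih =>
    rw [← Nat.add_assoc, Nat.choose_succ_succ', ih, Nat.choose_succ_succ', Nat.choose_one_right,
      Nat.choose_one_right]
    ring

lemma Finset.sum_choose_two_succ_le {ι : Type*} (s : Finset ι) (f : ι → ℕ) :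
    ∑ i ∈ s, (f i + 1).choose 2 ≤ (∑ i ∈ s, f i + 1).choose 2 := by
  classical
  induction s using Finset.induction_on with
  | empty => simp
  | @insert a s ha ih =>
    rw [sum_insert ha, sum_insert ha, Nat.add_assoc, Nat.add_choose_two, Nat.add_choose_two (f a)]
    have : f a * 1 ≤ f a * (∑ i ∈ s, f i + 1) := Nat.mul_le_mul_left _ (by omega)
    have h12 : (1 : ℕ).choose 2 = 0 := rfl
    linarith

lemma Nat.add_choose_two_sub_le_of_le {n a b : ℕ} (hab : a ≤ b) (hbn : b < n) :
    b + (n - b).choose 2 ≤ a + (n - a).choose 2 := by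
  have hsplit : n - a = (n - b) + (b - a) := by omega
  have : 1 * (b - a) ≤ (n - b) * (b - a) := Nat.mul_le_mul_right _ (by omega)
  rw [hsplit, Nat.add_choose_two]
  omega

namespace SimpleGraph

variable {V : Type*} {G : SimpleGraph V}

lemma IsBridge.mem_edgeSet_of_le {T : SimpleGraph V} (hT : T ≤ G) (hTc : T.Preconnected)
    {e : Sym2 V} (hb : G.IsBridge e) : e ∈ T.edgeSet := by
  induction e with | h x y =>
  by_contra he
  exact hb <| (hTc x y).mono fun a b hab ↦
    deleteEdges_adj.2 ⟨hT hab, fun h ↦ he (Set.mem_singleton_iff.1 h ▸ hab)⟩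

lemma IsBridge.mem_edges_of_isTrail {u v : V} {e : Sym2 V} {p : G.Walk u v} (hb : G.IsBridge e)
    (hp : p.IsTrail) (he : e ∈ p.edges) (q : G.Walk u v) : e ∈ q.edges := by
  induction e with | h x y =>
  refine q.mem_edges_of_not_reachable_deleteEdges fun huv ↦ hb ?_
  have hy : (G.deleteEdges {s(x, y)}).Reachable u y := by
    by_contra h
    exact hp.not_mem_edges_of_not_reachable h (fun h' ↦ h (huv.trans h')) he
  have hx : (G.deleteEdges {s(x, y)}).Reachable u x := by
    by_contra h
    refine hp.not_mem_edges_of_not_reachable (x := y) ?_ ?_ (Sym2.eq_swap ▸ he) <;>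
      rw [Sym2.eq_swap]
    exacts [h, fun h' ↦ h (huv.trans h')]
  exact hx.symm.trans hy

lemma Reachable.deleteEdges_or {w z z' : V} (h : G.Reachable w z) :
    (G.deleteEdges {s(z, z')}).Reachable w z ∨ (G.deleteEdges {s(z, z')}).Reachable w z' := by
  classical
  obtain ⟨P, hP⟩ := h.exists_isPath
  by_cases he : s(z, z') ∈ P.edges
  · have hz' := P.snd_mem_support_of_mem_edges he
    have hz := Walk.endpoint_notMem_support_takeUntil hP hz' (P.edges_subset_edgeSet he).ne
    exact .inr ⟨(P.takeUntil z' hz').toDeleteEdge _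
      fun h ↦ hz ((P.takeUntil z' hz').fst_mem_support_of_mem_edges h)⟩
  · exact .inl ⟨P.toDeleteEdge _ he⟩

lemma Preconnected.reachable_deleteEdges_or {e : Sym2 V} (hG : G.Preconnected) {u v : V}
    (huv : ¬ (G.deleteEdges {e}).Reachable u v) (w : V) :
    (G.deleteEdges {e}).Reachable u w ∨ (G.deleteEdges {e}).Reachable v w := by
  induction e with | h z z' =>
  rcases (hG u z).deleteEdges_or (z' := z') with hu | hu <;>
  rcases (hG v z).deleteEdges_or (z' := z') with hv | hv <;>
  rcases (hG w z).deleteEdges_or (z' := z') with hw | hw <;>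
  first
  | exact absurd (hu.trans hv.symm) huv
  | exact .inl (hu.trans hw.symm)
  | exact .inr (hv.trans hw.symm)

lemma IsAcyclic.not_reachable_deleteEdges_of_mem_edges (hG : G.IsAcyclic) {u v : V}
    {p : G.Walk u v} (hp : p.IsTrail) {e : Sym2 V} (he : e ∈ p.edges) :
    ¬ (G.deleteEdges {e}).Reachable u v := by
  induction e with | h x y =>
  rw [reachable_deleteEdges_iff_exists_walk]
  have hb := isAcyclic_iff_forall_isBridge.1 hG (p.edges_subset_edgeSet he)
  exact fun ⟨q, hq⟩ ↦ hq (hb.mem_edges_of_isTrail hp he q)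

lemma card_connectedComponent_lt_card_deleteEdges [Finite V] {e : Sym2 V} (he : e ∈ G.edgeSet)
    (hb : G.IsBridge e) :
    Nat.card G.ConnectedComponent < Nat.card (G.deleteEdges {e}).ConnectedComponent := by
  induction e with | h u v =>
  have := Fintype.ofFinite G.ConnectedComponent
  have := Fintype.ofFinite (G.deleteEdges {s(u, v)}).ConnectedComponent
  rw [Nat.card_eq_fintype_card, Nat.card_eq_fintype_card]
  refine Fintype.card_lt_of_surjective_not_injective _
    (ConnectedComponent.surjective_map_ofLE (deleteEdges_le _)) fun hinj ↦ hb ?_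
  rw [← ConnectedComponent.eq]
  refine hinj ?_
  simp only [ConnectedComponent.map_mk, Hom.coe_ofLE, id, ConnectedComponent.eq]
  exact Adj.reachable he

lemma card_connectedComponent_add_card_le_card_deleteEdges [Finite V] (F : Finset (Sym2 V))
    (hF : ∀ e ∈ F, e ∈ G.edgeSet ∧ G.IsBridge e) :
    Nat.card G.ConnectedComponent + F.card ≤ Nat.card (G.deleteEdges F).ConnectedComponent := by
  classical
  induction F using Finset.induction_on with
  | empty => simp
  | @insert e F heF ih =>
    obtain ⟨he, hb⟩ := hF e (mem_insert_self e F)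
    have hlt : Nat.card (G.deleteEdges F).ConnectedComponent <
        Nat.card ((G.deleteEdges F).deleteEdges {e}).ConnectedComponent :=
      card_connectedComponent_lt_card_deleteEdges (by simp [edgeSet_deleteEdges, he, heF])
        (hb.anti (deleteEdges_le _))
    rw [deleteEdges_deleteEdges, Set.union_singleton, ← coe_insert] at hlt
    have := ih fun e he ↦ hF e (mem_insert_of_mem he)
    rw [card_insert_of_notMem heF]
    omega

lemma ncard_bridges_add_one_le_card_connectedComponent_deleteEdges [Finite V]
    (hG : G.Connected) :
    {e | G.IsBridge e}.ncard + 1 ≤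
      Nat.card (G.deleteEdges {e | G.IsBridge e}).ConnectedComponent := by
  have hB := Set.toFinite {e | G.IsBridge e}
  have := hG.preconnected.subsingleton_connectedComponent
  have := hG.nonempty.map G.connectedComponentMk
  have h := card_connectedComponent_add_card_le_card_deleteEdges hB.toFinset fun e he ↦
    ⟨IsBridge.mem_edgeSet_of_le le_rfl hG.preconnected (hB.mem_toFinset.1 he), hB.mem_toFinset.1 he⟩
  rwa [Nat.card_unique, hB.coe_toFinset, ← Set.ncard_eq_toFinset_card _ hB, add_comm] at h

/-- Edges lie inside components, and `∑ C(nᵢ, 2)` over `c` parts of total size `n` is largest when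
all parts but one are single vertices. -/
lemma ncard_edgeSet_le_choose_two [Fintype V] (H : SimpleGraph V) :
    H.edgeSet.ncard ≤ (Fintype.card V + 1 - Nat.card H.ConnectedComponent).choose 2 := by
  classical
  let part : H.ConnectedComponent → Finset V := fun C ↦ {v | H.connectedComponentMk v = C}
  have hsub : H.edgeSet ⊆
      ↑(univ.biUnion fun C ↦ (part C).offDiag.image (Function.uncurry Sym2.mk)) := by
    rintro ⟨u, v⟩ huv
    simp only [coe_biUnion, coe_univ, Set.mem_univ, Set.iUnion_true, Set.mem_iUnion, coe_image,
      coe_offDiag, Set.mem_image]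
    refine ⟨H.connectedComponentMk u, (u, v), ?_, rfl⟩
    simp [part, Set.mem_offDiag, ConnectedComponent.eq, (Adj.reachable huv).symm, huv.ne]
  have hpart : ∀ C, (part C).card - 1 + 1 = (part C).card := fun C ↦
    Nat.sub_add_cancel <| card_pos.2 <| C.ind fun v ↦ ⟨v, by simp [part]⟩
  have hsum : ∑ C, ((part C).card - 1) + Nat.card H.ConnectedComponent = Fintype.card V := by
    rw [Nat.card_eq_fintype_card, ← card_univ, card_eq_sum_ones, ← sum_add_distrib,
      Finset.sum_congr rfl fun C _ ↦ hpart C, ← card_univ,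
      card_eq_sum_card_fiberwise (f := H.connectedComponentMk) (t := univ) (by simp)]
  calc H.edgeSet.ncard
      ≤ ∑ C, ((part C).offDiag.image (Function.uncurry Sym2.mk)).card :=
        ((Set.ncard_le_ncard hsub).trans_eq (Set.ncard_coe_finset _)).trans card_biUnion_le
    _ = ∑ C, ((part C).card - 1 + 1).choose 2 := by simp only [Sym2.card_image_offDiag, hpart]
    _ ≤ (∑ C, ((part C).card - 1) + 1).choose 2 := sum_choose_two_succ_le _ _
    _ = _ := by congr 1; omega

lemma ncard_bridges_le_of_choose_two_add_le [Fintype V] (hG : G.Connected) (k : ℕ)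
    (he : (Fintype.card V - k - 1).choose 2 + k + 2 ≤ G.edgeSet.ncard) :
    {e | G.IsBridge e}.ncard ≤ k := by
  by_contra! hkb
  have hc := ncard_bridges_add_one_le_card_connectedComponent_deleteEdges hG
  set B := {e | G.IsBridge e}
  set H := G.deleteEdges B
  have hcn : Nat.card H.ConnectedComponent ≤ Fintype.card V :=
    Nat.card_eq_fintype_card (α := V) ▸
      Nat.card_le_card_of_surjective _ fun C ↦ C.ind fun v ↦ ⟨v, rfl⟩
  have hBE : B ⊆ G.edgeSet := fun e he ↦ IsBridge.mem_edgeSet_of_le le_rfl hG.preconnected he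
  have hE : G.edgeSet.ncard = B.ncard + H.edgeSet.ncard := by
    rw [edgeSet_deleteEdges, Set.ncard_sdiff hBE, Nat.add_sub_cancel' (Set.ncard_le_ncard hBE)]
  have hH : H.edgeSet.ncard ≤ (Fintype.card V - B.ncard).choose 2 :=
    (ncard_edgeSet_le_choose_two H).trans (Nat.choose_le_choose 2 (by omega))
  have hmono :=
    Nat.add_choose_two_sub_le_of_le (a := k + 1) hkb (by omega : B.ncard < Fintype.card V)
  rw [← Nat.sub_sub] at hmono
  omega

lemma IsTree.exists_isPath_one_edge_outside {T : SimpleGraph V} (hT : T ≤ G) (hTt : T.IsTree)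
    {u v : V} {P : T.Walk u v} (hP : P.IsPath) {d : Sym2 V} (hdP : d ∈ P.edges)
    (hd : ¬ G.IsBridge d) :
    ∃ (Q : G.Walk u v) (f : Sym2 V), Q.IsPath ∧ f ∈ Q.edges ∧ f ∉ T.edgeSet ∧
      ∀ e ∈ Q.edges, e ≠ f → e ∈ T.edgeSet := by
  set T' := T.deleteEdges {d}
  have huv : ¬ T'.Reachable u v :=
    hTt.isAcyclic.not_reachable_deleteEdges_of_mem_edges hP.isTrail hdP
  -- a walk avoiding `d` must leave the side of `u` in `T - d` through an edge outside `T`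
  obtain ⟨W⟩ : (G.deleteEdges {d}).Reachable u v := by
    induction d with | h z z' =>
    exact ((hTt.connected.mono hT).connected_delete_edge_of_not_isBridge hd).preconnected u v
  obtain ⟨⟨⟨x, x'⟩, hxx'⟩, -, hx, hx'⟩ :=
    W.exists_boundary_dart {w | T'.Reachable u w} (Reachable.refl u) huv
  obtain ⟨hGxx', hxx'd⟩ := deleteEdges_adj.1 hxx'
  have hfT : s(x, x') ∉ T.edgeSet := fun h ↦ hx' (hx.trans (deleteEdges_adj.2 ⟨h, hxx'd⟩).reachable)
  have hx'v : T'.Reachable v x' :=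
    (hTt.connected.preconnected.reachable_deleteEdges_or huv x').resolve_left hx'
  set K := T' ⊔ edge x x'
  have hKG : K ≤ G := sup_le ((deleteEdges_le _).trans hT) ((edge_le_iff G).2 (.inr hGxx'))
  have hKT' : K.deleteEdges {s(x, x')} ≤ T' := by
    intro a b hab
    obtain ⟨hab | hab, hne⟩ := deleteEdges_adj.1 hab
    · exact hab
    · exact absurd (Sym2.eq_iff.2 ((edge_adj _ _ _ _).1 hab).1) hne
  have hKxx' : K.Adj x x' :=
    (sup_adj _ _ _ _).2 (.inr ((edge_adj _ _ _ _).2 ⟨.inl ⟨rfl, rfl⟩, hGxx'.ne⟩))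
  obtain ⟨Q, hQ⟩ :=
    ((hx.mono le_sup_left).trans (hKxx'.reachable.trans (hx'v.symm.mono le_sup_left))).exists_isPath
  refine ⟨Q.mapLe hKG, s(x, x'), hQ.mapLe hKG, ?_, hfT, fun e he hef ↦ ?_⟩
  · rw [Walk.edges_mapLe_eq_edges]
    exact Q.mem_edges_of_not_reachable_deleteEdges fun h ↦ huv (h.mono hKT')
  · rw [Walk.edges_mapLe_eq_edges] at he
    have heK := Q.edges_subset_edgeSet he
    rw [edgeSet_sup] at heK
    rcases heK with he | he
    · exact ((edgeSet_deleteEdges _).subset he).1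
    · exact absurd (edgeSet_edge_subset he) hef

open Classical in
noncomputable def treeColoring (G T : SimpleGraph V) {k : ℕ} (φ : Sym2 V → Fin k)
    (c₀ c₁ : Fin k) (e : Sym2 V) : Fin k :=
  if G.IsBridge e then φ e else if e ∈ T.edgeSet then c₀ else c₁

section treeColoring

variable {T : SimpleGraph V} {k : ℕ} {φ : Sym2 V → Fin k} {c₀ c₁ : Fin k} {e : Sym2 V}

lemma treeColoring_of_isBridge (h : G.IsBridge e) : treeColoring G T φ c₀ c₁ e = φ e :=
  if_pos h

lemma treeColoring_of_mem (h : ¬ G.IsBridge e) (h' : e ∈ T.edgeSet) :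
    treeColoring G T φ c₀ c₁ e = c₀ := by
  simp [treeColoring, h, h']

lemma treeColoring_of_not_mem (hT : T ≤ G) (hTc : T.Preconnected) (h : e ∉ T.edgeSet) :
    treeColoring G T φ c₀ c₁ e = c₁ := by
  have hb : ¬ G.IsBridge e := fun hb ↦ h (hb.mem_edgeSet_of_le hT hTc)
  simp [treeColoring, h, hb]

lemma exists_isPath_count_treeColoring_eq_one_of_not_isBridge (hT : T ≤ G) (hTt : T.IsTree)
    (h01 : c₀ ≠ c₁) {u v : V} {P : T.Walk u v} (hP : P.IsPath) {d : Sym2 V} (hdP : d ∈ P.edges)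
    (hd : ¬ G.IsBridge d) (hP₀ : ∀ e ∈ P.edges, G.IsBridge e → φ e = c₀) :
    ∃ p : G.Walk u v, p.IsPath ∧ ∃ col, (p.edges.map (treeColoring G T φ c₀ c₁)).count col = 1 := by
  obtain ⟨Q, f, hQ, hfQ, hfT, hQT⟩ := hTt.exists_isPath_one_edge_outside hT hP hdP hd
  refine ⟨Q, hQ, treeColoring G T φ c₀ c₁ f,
    List.count_map_eq_one hQ.edges_nodup hfQ fun e he hce ↦ ?_⟩
  by_contra hef
  have he₀ : treeColoring G T φ c₀ c₁ e = c₀ := by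
    by_cases heb : G.IsBridge e
    · have heP := heb.mem_edges_of_isTrail hQ.isTrail he (P.mapLe hT)
      rw [Walk.edges_mapLe_eq_edges] at heP
      rw [treeColoring_of_isBridge heb, hP₀ e heP heb]
    · exact treeColoring_of_mem heb (hQT e he hef)
  exact h01 (he₀.symm.trans (hce.trans (treeColoring_of_not_mem hT hTt.connected.preconnected hfT)))

lemma exists_isPath_count_treeColoring_eq_one (hT : T ≤ G) (hTt : T.IsTree)
    (hφ : Set.InjOn φ {e | G.IsBridge e}) (h01 : c₀ ≠ c₁) {u v : V} (huv : u ≠ v) :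
    ∃ p : G.Walk u v, p.IsPath ∧ ∃ col, (p.edges.map (treeColoring G T φ c₀ c₁)).count col = 1 := by
  obtain ⟨P, hP, -⟩ := hTt.existsUnique_path u v
  by_cases hdetour : ∃ d ∈ P.edges, ¬ G.IsBridge d ∧ ∀ e ∈ P.edges, G.IsBridge e → φ e = c₀
  · obtain ⟨d, hdP, hd, hP₀⟩ := hdetour
    exact exists_isPath_count_treeColoring_eq_one_of_not_isBridge hT hTt h01 hP hdP hd hP₀
  push Not at hdetour
  obtain ⟨d, hdP, hd, hd₀⟩ :
      ∃ d ∈ P.edges, G.IsBridge d ∧ ∀ e ∈ P.edges, ¬ G.IsBridge e → φ d ≠ c₀ := by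
    by_cases hnb : ∃ e ∈ P.edges, ¬ G.IsBridge e
    · obtain ⟨e, heP, he⟩ := hnb
      obtain ⟨d, hdP, hd, hd₀⟩ := hdetour e heP he
      exact ⟨d, hdP, hd, fun _ _ _ ↦ hd₀⟩
    · push Not at hnb
      obtain ⟨d, hdP⟩ := List.exists_mem_of_ne_nil _ (Walk.edges_eq_nil.not.2 (P.not_nil_of_ne huv))
      exact ⟨d, hdP, hnb d hdP, fun e he hne ↦ absurd (hnb e he) hne⟩
  refine ⟨P.mapLe hT, hP.mapLe hT, treeColoring G T φ c₀ c₁ d, ?_⟩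
  rw [Walk.edges_mapLe_eq_edges]
  refine List.count_map_eq_one hP.edges_nodup hdP fun e he hce ↦ ?_
  by_cases heb : G.IsBridge e
  · exact hφ heb hd (by rwa [treeColoring_of_isBridge heb, treeColoring_of_isBridge hd] at hce)
  · rw [treeColoring_of_mem heb (P.edges_subset_edgeSet he), treeColoring_of_isBridge hd] at hce
    exact absurd hce.symm (hd₀ e he heb)

end treeColoring

theorem exists_isCFCColoring_of_encard_bridges_le (hG : G.Connected) {k : ℕ} (hk : 2 ≤ k)
    (hB : {e | G.IsBridge e}.encard ≤ k) : ∃ c : Sym2 V → Fin k, G.IsCFCColoring c := by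
  obtain ⟨T, hTG, hT⟩ := hG.exists_isTree_le
  have : Nonempty (Fin k) := ⟨⟨0, by omega⟩⟩
  obtain ⟨φ, -, hφ⟩ := (Set.finite_of_encard_le_coe hB).exists_injOn_of_encard_le
    (hB.trans_eq (by simp) : _ ≤ (Set.univ : Set (Fin k)).encard)
  exact ⟨treeColoring G T φ ⟨0, by omega⟩ ⟨1, by omega⟩, fun u v huv ↦
    exists_isPath_count_treeColoring_eq_one hTG hT hφ (by simp [Fin.ext_iff]) huv⟩

end SimpleGraph

theorem stmt_6_general {V : Type*} [Fintype V] (G : SimpleGraph V) (n k : ℕ)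
    (hn : Fintype.card V = n) (hk2 : 2 ≤ k) (hc : G.Connected)
    (he : (n - k - 1).choose 2 + k + 2 ≤ G.edgeSet.ncard) :
    G.cfc ≤ k := by
  subst hn
  have hB := G.ncard_bridges_le_of_choose_two_add_le hc k he
  obtain ⟨c, hcol⟩ := G.exists_isCFCColoring_of_encard_bridges_le hc hk2 <| by
    rw [← (Set.toFinite _).cast_ncard_eq]
    exact_mod_cast hB
  exact Nat.sInf_le ⟨c, hcol⟩

/-- For `2 ≤ k ≤ n - 3`, every connected graph `G` of order `n` with at least
`C(n-k-1, 2) + k + 2` edges satisfies `cfc(G) ≤ k`. -/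
theorem stmt_6 {V : Type*} [Fintype V] (G : SimpleGraph V) (n k : ℕ)
    (hn : Fintype.card V = n) (hk2 : 2 ≤ k) (hk : k ≤ n - 3) (hc : G.Connected)
    (he : (n - k - 1).choose 2 + k + 2 ≤ G.edgeSet.ncard) :
    G.cfc ≤ k :=
  stmt_6_general G n k hn hk2 hc he
end

section
/- Let n and k be integers with n ≥ 2 and 3 ≤ k < ⌈log₂ n⌉. Then: (1) every connected simple graph G of order n with |E(G)| ≤ n−1 satisfies cfc(G) ≥ k; and (2) there exists a connected simple graph of order n with exactly n edges whose conflict-free connection number is less than k (namely the cycle C_n, with cfc(C_n) = 2). Consequently, n−1 is the largest integer m such that every connected graph of order n with at most m edges has conflict-free connection number at least k. -/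
open SimpleGraph

/-!
Fix a root `r` of a tree and send each vertex `v` to the vector in `(ZMod 2) ^ k` of
parities of the color counts on the path from `r` to `v`. Along any walk from `u` to `v`
this vector changes by the color parities of the walk, so the two ends of a conflict-free
path receive different vectors: a tree with a conflict-free `k`-coloring has at most `2 ^ k`
vertices, and a connected graph of order `n` with at most `n - 1` edges is a tree.
On the cycle, coloring one edge `1` and the rest `0` works, since any two vertices are
joined by an arc through that edge; one color is not enough as soon as two vertices are
nonadjacent.
-/

lemma List.count_one_map_indicator {α : Type*} [DecidableEq α] (a : α) (l : List α) :
    (l.map fun x => if x = a then (1 : Fin 2) else 0).count 1 = l.count a := by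
  simp only [List.count, List.countP_map]
  congr 1
  funext x
  by_cases h : x = a <;> simp [h]

namespace SimpleGraph

variable {V : Type*} {G : SimpleGraph V} {k : ℕ}

lemma cfc_le_of_isCFCColoring {c : Sym2 V → Fin k} (hc : G.IsCFCColoring c) : G.cfc ≤ k :=
  Nat.sInf_le ⟨c, hc⟩

lemma exists_isCFCColoring_cfc (h : ∃ k, ∃ c : Sym2 V → Fin k, G.IsCFCColoring c) :
    ∃ c : Sym2 V → Fin G.cfc, G.IsCFCColoring c :=
  Nat.sInf_mem h

lemma Connected.isCFCColoring_of_injective (hG : G.Connected) {c : Sym2 V → Fin k}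
    (hc : Function.Injective c) : G.IsCFCColoring c := by
  intro u v huv
  obtain ⟨p, hp⟩ := (hG.preconnected u v).exists_isPath
  obtain ⟨e, he⟩ := List.exists_mem_of_ne_nil _ (p.edges_eq_nil.not.mpr (p.not_nil_of_ne huv))
  exact ⟨p, hp, c e, List.count_eq_one_of_mem (hp.isTrail.edges_nodup.map hc)
    (List.mem_map_of_mem he)⟩

lemma Connected.exists_isCFCColoring [Finite V] (hG : G.Connected) :
    ∃ k, ∃ c : Sym2 V → Fin k, G.IsCFCColoring c := by
  have := Fintype.ofFinite V
  exact ⟨_, _, hG.isCFCColoring_of_injective (Fintype.equivFin (Sym2 V)).injective⟩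

lemma IsCFCColoring.adj_of_fin_one {c : Sym2 V → Fin 1} (hc : G.IsCFCColoring c) {u v : V}
    (huv : u ≠ v) : G.Adj u v := by
  obtain ⟨p, -, col, hcol⟩ := hc u v huv
  have hlen : (p.edges.map c).count col = p.length := by
    rw [List.count_eq_length.mpr fun _ _ => Subsingleton.elim _ _, List.length_map,
      p.length_edges]
  exact p.adj_of_length_eq_one (hlen ▸ hcol)

lemma IsCFCColoring.two_le {c : Sym2 V → Fin k} (hc : G.IsCFCColoring c) {u v : V}
    (huv : u ≠ v) (hnadj : ¬G.Adj u v) : 2 ≤ k := by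
  match k, c, hc with
  | 0, c, _ => exact (c s(u, u)).elim0
  | 1, _, hc => exact absurd (hc.adj_of_fin_one huv) hnadj
  | _ + 2, _, _ => omega

def colorParity (c : Sym2 V → Fin k) (l : List (Sym2 V)) : Fin k → ZMod 2 :=
  fun a => ((l.map c).count a : ZMod 2)

@[simp]
lemma colorParity_nil (c : Sym2 V → Fin k) : colorParity c [] = 0 := by
  ext a
  simp [colorParity]

@[simp]
lemma colorParity_append (c : Sym2 V → Fin k) (l₁ l₂ : List (Sym2 V)) :
    colorParity c (l₁ ++ l₂) = colorParity c l₁ + colorParity c l₂ := by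
  ext a
  simp [colorParity]

lemma colorParity_cons (c : Sym2 V → Fin k) (e : Sym2 V) (l : List (Sym2 V)) :
    colorParity c (e :: l) = colorParity c [e] + colorParity c l :=
  colorParity_append c [e] l

lemma colorParity_add_self (c : Sym2 V → Fin k) (l : List (Sym2 V)) :
    colorParity c l + colorParity c l = 0 :=
  funext fun a => CharTwo.add_self_eq_zero (colorParity c l a)

lemma colorParity_concat_edges (c : Sym2 V → Fin k) {u v w : V} (p : G.Walk u v)
    (h : G.Adj v w) :
    colorParity c (p.concat h).edges = colorParity c p.edges + colorParity c [s(v, w)] := by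
  rw [Walk.edges_concat, List.concat_eq_append, colorParity_append]

lemma IsAcyclic.colorParity_edges_of_adj (hG : G.IsAcyclic) (c : Sym2 V → Fin k) {r x y : V}
    {p : G.Walk r x} {q : G.Walk r y} (hp : p.IsPath) (hq : q.IsPath) (hxy : G.Adj x y) :
    colorParity c q.edges = colorParity c p.edges + colorParity c [s(x, y)] := by
  by_cases hx : x ∈ q.support
  · rw [hG.path_concat hp hq hxy hx, colorParity_concat_edges]
  · have hy := hG.mem_support_of_ne_mem_support_of_adj_of_isPath hp hq hxy hx
    rw [hG.path_concat hq hp hxy.symm hy, colorParity_concat_edges, Sym2.eq_swap, add_assoc,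
      colorParity_add_self, add_zero]

lemma colorParity_edges_of_potential (c : Sym2 V → Fin k) (φ : V → Fin k → ZMod 2)
    (hφ : ∀ x y, G.Adj x y → φ y = φ x + colorParity c [s(x, y)]) {u v : V}
    (p : G.Walk u v) : φ v = φ u + colorParity c p.edges := by
  induction p with
  | nil => simp
  | @cons x y _ h q ih =>
    rw [ih, hφ x y h, Walk.edges_cons, colorParity_cons c _ q.edges, add_assoc]

lemma IsTree.card_le_two_pow [Finite V] (hG : G.IsTree) {c : Sym2 V → Fin k}
    (hc : G.IsCFCColoring c) : Nat.card V ≤ 2 ^ k := by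
  obtain ⟨r⟩ := hG.connected.nonempty
  have hpath : ∀ v, ∃ p : G.Walk r v, p.IsPath := fun v =>
    (hG.connected.preconnected r v).exists_isPath
  choose path hpath using hpath
  let φ : V → Fin k → ZMod 2 := fun v => colorParity c (path v).edges
  have hφ : ∀ x y, G.Adj x y → φ y = φ x + colorParity c [s(x, y)] := fun x y hxy =>
    hG.isAcyclic.colorParity_edges_of_adj c (hpath x) (hpath y) hxy
  have hinj : Function.Injective φ := by
    intro u v huv
    by_contra hne
    obtain ⟨p, -, col, hcol⟩ := hc u v hne
    have := congrFun (colorParity_edges_of_potential c φ hφ p) col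
    simp [huv, colorParity, hcol] at this
  calc Nat.card V ≤ Nat.card (Fin k → ZMod 2) := Nat.card_le_card_of_injective φ hinj
    _ = 2 ^ k := by simp

lemma Connected.isTree_of_ncard_edgeSet_le [Finite V] (hG : G.Connected)
    (h : G.edgeSet.ncard + 1 ≤ Nat.card V) : G.IsTree := by
  have := hG.card_vert_le_card_edgeSet_add_one
  rw [Nat.card_coe_set_eq] at this
  exact isTree_iff_connected_and_card.mpr ⟨hG, by rw [Nat.card_coe_set_eq]; omega⟩

lemma Walk.IsCycle.exists_isPath_mem_edges [DecidableEq V] {v w : V} {c : G.Walk v v}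
    (hc : c.IsCycle) (hw : w ∈ c.support) (hvw : v ≠ w) {e : Sym2 V} (he : e ∈ c.edges) :
    ∃ p : G.Walk v w, p.IsPath ∧ e ∈ p.edges := by
  have hsplit : ((c.takeUntil w hw).append (c.dropUntil w hw)).IsCycle := by
    rwa [c.take_spec hw]
  rw [← c.take_spec hw, Walk.edges_append, List.mem_append] at he
  rcases he with he | he
  · exact ⟨_, hc.isPath_takeUntil hw, he⟩
  · exact ⟨_, (hsplit.isPath_of_append_right (Walk.not_nil_of_ne hvw)).reverse,
      by simpa using he⟩

lemma cycleGraph.mem_support_cycle (m : ℕ) (v : Fin (m + 3)) :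
    v ∈ (cycleGraph.cycle m).support := by
  have hv : (cycleGraph.cycle m).getVert (m + 3 - v) = v := by
    rw [cycleGraph.getVert_cycle (by omega)]
    ext
    simp [Nat.sub_sub_self v.is_lt.le, Nat.mod_eq_of_lt v.is_lt]
  exact hv ▸ Walk.getVert_mem_support _ _

lemma cycleGraph.mem_edges_cycle (m : ℕ) :
    s(0, Fin.last (m + 2)) ∈ (cycleGraph.cycle m).edges := by
  unfold cycleGraph.cycle
  exact List.mem_cons_self

lemma isCFCColoring_cycleGraph (m : ℕ) :
    (cycleGraph (m + 3)).IsCFCColoring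
      (fun e => if e = s(0, Fin.last (m + 2)) then (1 : Fin 2) else 0) := by
  intro u v huv
  have hu := cycleGraph.mem_support_cycle m u
  obtain ⟨p, hp, he⟩ := (cycleGraph.isCycle_cycle.rotate hu).exists_isPath_mem_edges
    ((Walk.mem_support_rotate_iff _ _ hu).mpr (cycleGraph.mem_support_cycle m v)) huv
    ((Walk.rotate_edges _ _ hu).mem_iff.mpr (cycleGraph.mem_edges_cycle m))
  exact ⟨p, hp, 1, (List.count_one_map_indicator _ _).trans
    (List.count_eq_one_of_mem hp.isTrail.edges_nodup he)⟩

lemma cycleGraph_cfc (m : ℕ) : (cycleGraph (m + 4)).cfc = 2 := by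
  refine le_antisymm (cfc_le_of_isCFCColoring (isCFCColoring_cycleGraph (m + 1))) ?_
  obtain ⟨c, hc⟩ := exists_isCFCColoring_cfc cycleGraph_connected.exists_isCFCColoring
  refine hc.two_le (u := 0) (v := 2) (by simp [Fin.ext_iff, Nat.mod_eq_of_lt]) ?_
  simp [cycleGraph_adj, Fin.ext_iff, Fin.val_neg', Nat.mod_eq_of_lt]

lemma cycleGraph_ncard_edgeSet (m : ℕ) : (cycleGraph (m + 3)).edgeSet.ncard = m + 3 := by
  have hsum := sum_degrees_eq_twice_card_edges (cycleGraph (m + 3))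
  simp only [cycleGraph_degree_three_le, Finset.sum_const, Finset.card_univ, Fintype.card_fin,
    smul_eq_mul] at hsum
  rw [← coe_edgeFinset, Set.ncard_coe_finset]
  omega

end SimpleGraph

theorem stmt_12_general (n k : ℕ) (hk3 : 3 ≤ k) (hk : k < Nat.clog 2 n) :
    (∀ G : SimpleGraph (Fin n), G.Connected → G.edgeSet.ncard ≤ n - 1 → k ≤ G.cfc) ∧
    ((cycleGraph n).Connected ∧ (cycleGraph n).edgeSet.ncard = n ∧
      (cycleGraph n).cfc = 2 ∧ 2 < k) := by
  have h2k : 2 ^ k < n := (Nat.lt_clog_iff_pow_lt one_lt_two).mp hk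
  have hk8 : 2 ^ 3 ≤ 2 ^ k := Nat.pow_le_pow_right two_pos hk3
  refine ⟨fun G hG hE => ?_, ?_⟩
  · have hT : G.IsTree := hG.isTree_of_ncard_edgeSet_le (by rw [Nat.card_fin]; omega)
    obtain ⟨c, hc⟩ := exists_isCFCColoring_cfc hG.exists_isCFCColoring
    have hcard := hT.card_le_two_pow hc
    rw [Nat.card_fin] at hcard
    exact ((Nat.pow_lt_pow_iff_right one_lt_two).mp (h2k.trans_le hcard)).le
  · obtain ⟨m, rfl⟩ : ∃ m, n = m + 4 := ⟨n - 4, by omega⟩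
    exact ⟨cycleGraph_connected, cycleGraph_ncard_edgeSet (m + 1), cycleGraph_cfc m, by omega⟩

/-- For `n ≥ 2` and `3 ≤ k < ⌈log₂ n⌉`: every connected graph of order `n` with at most
`n - 1` edges has `cfc ≥ k`, while the cycle `C_n` is a connected graph of order `n` with
exactly `n` edges whose conflict-free connection number `2` is less than `k`.  Hence
`n - 1` is the largest integer `m` such that every connected graph of order `n` with at
most `m` edges has conflict-free connection number at least `k`. -/
theorem stmt_12 (n k : ℕ) (hn : 2 ≤ n) (hk3 : 3 ≤ k) (hk : k < Nat.clog 2 n) :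
    (∀ G : SimpleGraph (Fin n), G.Connected → G.edgeSet.ncard ≤ n - 1 → k ≤ G.cfc) ∧
    ((cycleGraph n).Connected ∧ (cycleGraph n).edgeSet.ncard = n ∧
      (cycleGraph n).cfc = 2 ∧ 2 < k) :=
  stmt_12_general n k hk3 hk
end
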